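/- arXiv:1402.0620 — 2 statements merged into one kernel-verified Lean document; each statement's English description precedes it below -/
import Mathlib

section
/- Suppose that for every prime p ≥ 2898239 we have p' − p ≤ p/(111 log² p), where p' is the next prime after p. Then for every integer k ≥ 2898240, with p the largest prime less than k, one has 2√p + (k − p − 1) ≤ 2√(k−1) + (k−1)/(111 log²(k−1)). -/
/-!
The next prime `p'` after `p` is at least `k`, so Trudgian's bound gives
`k - p - 1 < p' - p ≤ p / (111 log² p)`. Since `x / log² x = (log x / √x)⁻²` is increasing for
`x ≥ e²`, this is at most `(k - 1) / (111 log² (k - 1))`, and `√p ≤ √(k - 1)`.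
-/

open Real

theorem Real.monotoneOn_div_log_sq : MonotoneOn (fun x : ℝ ↦ x / log x ^ 2) (.Ici (exp 2)) := by
  intro a ha b hb hab
  have hpos : ∀ x ∈ Set.Ici (exp 2), 0 < log x / √x := fun x hx ↦ by
    have hx0 : 0 < x := (exp_pos 2).trans_le hx
    have : 2 ≤ log x := (le_log_iff_exp_le hx0).2 hx
    positivity
  have hsq : ∀ x ∈ Set.Ici (exp 2), x / log x ^ 2 = ((log x / √x) ^ 2)⁻¹ := fun x hx ↦ by
    rw [div_pow, sq_sqrt ((exp_pos 2).le.trans hx), inv_div]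
  show a / log a ^ 2 ≤ b / log b ^ 2
  rw [hsq a ha, hsq b hb]
  exact inv_anti₀ (pow_pos (hpos b hb) 2)
    (pow_le_pow_left₀ (hpos b hb).le (log_div_sqrt_antitoneOn ha hb hab) 2)

theorem Nat.exists_prime_gt_forall_prime_gt_le (n : ℕ) :
    ∃ q, q.Prime ∧ n < q ∧ ∀ r, r.Prime → n < r → q ≤ r := by
  have hex : ∃ q, q.Prime ∧ n < q :=
    let ⟨q, hnq, hq⟩ := Nat.exists_infinite_primes (n + 1); ⟨q, hq, hnq⟩
  exact ⟨Nat.find hex, (Nat.find_spec hex).1, (Nat.find_spec hex).2,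
    fun r hr hnr ↦ Nat.find_min' hex ⟨hr, hnr⟩⟩

/-- Assuming Trudgian's bound `p' - p ≤ p / (111 log² p)` for all primes `p ≥ 2898239`,
for every integer `k ≥ 2898240` with `p` the largest prime below `k` we have
`2√p + (k - p - 1) ≤ 2√(k-1) + (k-1)/(111 log²(k-1))`. -/
theorem trudgian_spectral_bound
    (htrud : ∀ p p' : ℕ, p.Prime → 2898239 ≤ p → p'.Prime → p < p' →
      (∀ q : ℕ, q.Prime → p < q → p' ≤ q) →
      (p' : ℝ) - p ≤ (p : ℝ) / (111 * (Real.log p) ^ 2))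
    (k : ℕ) (hk : 2898240 ≤ k)
    (p : ℕ) (hp : p.Prime) (hpk : p < k) (hpmax : ∀ q : ℕ, q.Prime → q < k → q ≤ p) :
    2 * Real.sqrt p + ((k : ℝ) - p - 1) ≤
      2 * Real.sqrt ((k : ℝ) - 1) + ((k : ℝ) - 1) / (111 * (Real.log ((k : ℝ) - 1)) ^ 2) := by
  have hp_ge : 2898239 ≤ p := hpmax 2898239 (by norm_num) (by omega)
  obtain ⟨p', hp', hpp', hp'min⟩ := Nat.exists_prime_gt_forall_prime_gt_le p
  have hkp' : k ≤ p' := not_lt.1 fun h ↦ (hpmax p' hp' h).not_gt hpp'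
  have hgap := htrud p p' hp hp_ge hp' hpp' hp'min
  have hkp'R : (k : ℝ) ≤ p' := by exact_mod_cast hkp'
  have hpkR : (p : ℝ) ≤ k - 1 := by
    rw [le_sub_iff_add_le]; exact_mod_cast hpk
  have hexp : exp 2 ≤ p := by
    have : exp 2 < 9 := by
      rw [show (2 : ℝ) = 1 + 1 by norm_num, exp_add]
      nlinarith [exp_one_lt_three, exp_pos 1]
    have : (2898239 : ℝ) ≤ p := by exact_mod_cast hp_ge
    linarith
  have hdensity : (p : ℝ) / (111 * log p ^ 2) ≤ (k - 1) / (111 * log (k - 1) ^ 2) := by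
    rw [div_mul_eq_div_div_swap, div_mul_eq_div_div_swap]
    exact div_le_div_of_nonneg_right
      (monotoneOn_div_log_sq hexp (hexp.trans hpkR) hpkR) (by norm_num)
  have hsqrt : √(p : ℝ) ≤ √(k - 1) := sqrt_le_sqrt hpkR
  linarith
end

section
/- Assume that for all sufficiently large n there is a prime between n and n + n^{0.525}. Then for all sufficiently large integers k, letting p be the largest prime below k, one has 2√p + (k − p − 1) ≤ 2(1 + k^{0.025})√(k−1). -/
open Real

/-!
Bertrand's postulate makes the largest prime `p` below `k` at least about `k / 2`, so the
Baker–Harman–Pintz hypothesis applies at `p`: the next prime `r`, which is at least `k`, satisfies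
`r ≤ p + p ^ 0.525`. Hence `k - p ≤ p ^ 0.525 ≤ √(k - 1) (k - 1) ^ 0.025`, and the bound follows
from `√p ≤ √(k - 1)`.
-/

theorem sub_one_div_two_lt_of_forall_prime_lt_le {k p : ℕ} (hk : 3 ≤ k)
    (hmax : ∀ q : ℕ, q.Prime → q < k → q ≤ p) : (k - 1) / 2 < p := by
  obtain ⟨q, hq, hlt, hle⟩ := Nat.exists_prime_lt_and_le_two_mul ((k - 1) / 2) (by omega)
  exact hlt.trans_le (hmax q hq (by omega))

theorem two_sqrt_add_sub_le_of_le_add_rpow {ε p k : ℝ} (hε : 0 ≤ ε) (hp : 0 ≤ p)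
    (hpk : p + 1 ≤ k) (hgap : k ≤ p + p ^ (1 / 2 + ε)) :
    2 * √p + (k - p - 1) ≤ 2 * (1 + k ^ ε) * √(k - 1) := by
  have hpx : p ≤ k - 1 := by linarith
  have hx : 0 ≤ k - 1 := hp.trans hpx
  have hsplit : (k - 1) ^ (1 / 2 + ε) = √(k - 1) * (k - 1) ^ ε := by
    rw [rpow_add' hx (by positivity), sqrt_eq_rpow]
  have hgap' : k - p - 1 ≤ √(k - 1) * k ^ ε :=
    calc k - p - 1 ≤ p ^ (1 / 2 + ε) := by linarith
      _ ≤ (k - 1) ^ (1 / 2 + ε) := by gcongr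
      _ = √(k - 1) * (k - 1) ^ ε := hsplit
      _ ≤ √(k - 1) * k ^ ε := by gcongr; linarith
  have hsqrt : √p ≤ √(k - 1) := sqrt_le_sqrt hpx
  have hprod : 0 ≤ √(k - 1) * k ^ ε := mul_nonneg (sqrt_nonneg _) (rpow_nonneg (by linarith) _)
  linarith

/-- Assuming the Baker–Harman–Pintz bound (a prime in `(n, n + n^0.525]` for all large `n`),
for all sufficiently large `k`, with `p` the largest prime below `k`,
`2√p + (k - p - 1) ≤ 2(1 + k^0.025)√(k-1)`. -/
theorem bhp_spectral_bound
    (hbhp : ∃ N : ℕ, ∀ n : ℕ, N ≤ n → ∃ q : ℕ, q.Prime ∧ n < q ∧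
      (q : ℝ) ≤ (n : ℝ) + (n : ℝ) ^ (0.525 : ℝ)) :
    ∃ K : ℕ, ∀ k : ℕ, K ≤ k →
      ∀ p : ℕ, p.Prime → p < k → (∀ q : ℕ, q.Prime → q < k → q ≤ p) →
        2 * Real.sqrt p + ((k : ℝ) - p - 1) ≤
          2 * (1 + (k : ℝ) ^ (0.025 : ℝ)) * Real.sqrt ((k : ℝ) - 1) := by
  obtain ⟨N, hN⟩ := hbhp
  refine ⟨2 * N + 3, fun k hk p _ hpk hmax => ?_⟩
  have hNp : N ≤ p := by
    have := sub_one_div_two_lt_of_forall_prime_lt_le (by omega) hmax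
    omega
  obtain ⟨r, hr, hpr, hr_le⟩ := hN p hNp
  have hkr : k ≤ r := not_lt.mp fun hrk => (hmax r hr hrk).not_gt hpr
  refine two_sqrt_add_sub_le_of_le_add_rpow (by norm_num) (Nat.cast_nonneg p)
    (by exact_mod_cast hpk) ?_
  calc (k : ℝ) ≤ r := by exact_mod_cast hkr
    _ ≤ p + (p : ℝ) ^ (1 / 2 + 0.025 : ℝ) := by convert hr_le using 3; norm_num
end
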